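/- arXiv:2001.05787 — 2 statements merged into one kernel-verified Lean document; each statement's English description precedes it below -/
import Mathlib

section
/- Let n, r be positive integers, a_1 ∈ {0,…,n−1}, a_2 ∈ {0,…,r−1}, and set ā_1 := (n − a_1)·𝟙{a_1 ≠ 0}. Then T^{(<)}_{a_1,a_2}(n,r) = { x̄ : x ∈ T_{ā_1,a_2}(n,r) } and T^{(≤)}_{a_1,a_2}(n,r) = { x̄ : x ∈ T^{(≥)}_{ā_1,a_2}(n,r) }, where x̄ := ⟨x_n, …, x_2, x_1⟩ denotes the reversal of x. -/
open scoped Classical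
open Finset

/-- `γ(x) = ∑_{i=1}^{n-1} i·𝟙{x_i > x_{i+1}}` (1-indexed). -/
noncomputable def gam {n r : ℕ} (x : Fin n → Fin r) : ℕ :=
  ∑ i : Fin n, if h : (i : ℕ) + 1 < n then
      (if (x ⟨(i : ℕ) + 1, h⟩ : ℕ) < (x i : ℕ) then (i : ℕ) + 1 else 0) else 0

/-- `γ_{(≥)}(x) = ∑_{i=1}^{n-1} i·𝟙{x_i ≥ x_{i+1}}` (1-indexed). -/
noncomputable def gamGe {n r : ℕ} (x : Fin n → Fin r) : ℕ :=
  ∑ i : Fin n, if h : (i : ℕ) + 1 < n then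
      (if (x ⟨(i : ℕ) + 1, h⟩ : ℕ) ≤ (x i : ℕ) then (i : ℕ) + 1 else 0) else 0

/-- `λ_{(<)}(x) = ∑_{i=1}^{n-1} i·𝟙{x_i < x_{i+1}}` (1-indexed). -/
noncomputable def lamLt {n r : ℕ} (x : Fin n → Fin r) : ℕ :=
  ∑ i : Fin n, if h : (i : ℕ) + 1 < n then
      (if (x i : ℕ) < (x ⟨(i : ℕ) + 1, h⟩ : ℕ) then (i : ℕ) + 1 else 0) else 0

/-- `λ_{(≤)}(x) = ∑_{i=1}^{n-1} i·𝟙{x_i ≤ x_{i+1}}` (1-indexed). -/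
noncomputable def lamLe {n r : ℕ} (x : Fin n → Fin r) : ℕ :=
  ∑ i : Fin n, if h : (i : ℕ) + 1 < n then
      (if (x i : ℕ) ≤ (x ⟨(i : ℕ) + 1, h⟩ : ℕ) then (i : ℕ) + 1 else 0) else 0

/-- `σ(x) = ∑ x_i`. -/
noncomputable def sig {n r : ℕ} (x : Fin n → Fin r) : ℕ := ∑ i : Fin n, (x i : ℕ)

/-- The non-binary Tenengolts code `T_{a₁,a₂}(n,r)`. -/
noncomputable def Tcode (n r a₁ a₂ : ℕ) : Finset (Fin n → Fin r) :=
  Finset.univ.filter (fun x => gam x ≡ a₁ [MOD n] ∧ sig x ≡ a₂ [MOD r])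

/-- The variant `T^{(≥)}_{a₁,a₂}(n,r)`. -/
noncomputable def TgeCode (n r a₁ a₂ : ℕ) : Finset (Fin n → Fin r) :=
  Finset.univ.filter (fun x => gamGe x ≡ a₁ [MOD n] ∧ sig x ≡ a₂ [MOD r])

/-- The variant `T^{(<)}_{a₁,a₂}(n,r)`. -/
noncomputable def TltCode (n r a₁ a₂ : ℕ) : Finset (Fin n → Fin r) :=
  Finset.univ.filter (fun x => lamLt x ≡ a₁ [MOD n] ∧ sig x ≡ a₂ [MOD r])

/-- The variant `T^{(≤)}_{a₁,a₂}(n,r)`. -/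
noncomputable def TleCode (n r a₁ a₂ : ℕ) : Finset (Fin n → Fin r) :=
  Finset.univ.filter (fun x => lamLe x ≡ a₁ [MOD n] ∧ sig x ≡ a₂ [MOD r])


private lemma sum_fin_to_range' (n : ℕ) (f : ℕ → ℕ) (hf : ∀ j, ¬ (j + 1 < n) → f j = 0) :
    ∑ i : Fin n, f (i : ℕ) = ∑ j ∈ Finset.range (n - 1), f j := by
  rw [Fin.sum_univ_eq_sum_range]
  symm
  apply Finset.sum_subset (Finset.range_subset_range.2 (Nat.sub_le n 1))
  intro j hj hj'
  simp only [Finset.mem_range] at hj hj'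
  exact hf j (by omega)

private lemma key' (n r : ℕ) (P : ℕ → ℕ → Prop) [DecidableRel P] (x : Fin n → Fin r) :
    ((∑ i : Fin n, if h : (i : ℕ) + 1 < n then
        (if P (x (⟨(i : ℕ) + 1, h⟩ : Fin n).rev : ℕ) (x i.rev : ℕ) then (i : ℕ) + 1 else 0) else 0)
      + ∑ i : Fin n, if h : (i : ℕ) + 1 < n then
        (if P (x i : ℕ) (x ⟨(i : ℕ) + 1, h⟩ : ℕ) then (i : ℕ) + 1 else 0) else 0)
      ≡ 0 [MOD n] := by
  set y : ℕ → ℕ := fun j => if h : j < n then (x ⟨j, h⟩ : ℕ) else 0 with hy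
  have hyval : ∀ (k : Fin n) (m : ℕ), (k : ℕ) = m → (x k : ℕ) = y m := by
    intro k m hm
    subst hm
    simp [hy, k.isLt]
  have h2 : (∑ i : Fin n, if h : (i : ℕ) + 1 < n then
        (if P (x i : ℕ) (x ⟨(i : ℕ) + 1, h⟩ : ℕ) then (i : ℕ) + 1 else 0) else 0)
      = ∑ j ∈ Finset.range (n - 1), if P (y j) (y (j + 1)) then j + 1 else 0 := by
    have e1 : (∑ i : Fin n, if h : (i : ℕ) + 1 < n then
        (if P (x i : ℕ) (x ⟨(i : ℕ) + 1, h⟩ : ℕ) then (i : ℕ) + 1 else 0) else 0)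
      = ∑ i : Fin n, (fun j : ℕ => if h : j + 1 < n then
          (if P (y j) (y (j + 1)) then j + 1 else 0) else 0) (i : ℕ) := by
      apply Finset.sum_congr rfl
      intro i _
      by_cases h : (i : ℕ) + 1 < n
      · simp only [dif_pos h]
        rw [hyval i (i : ℕ) rfl, hyval ⟨(i : ℕ) + 1, h⟩ ((i : ℕ) + 1) rfl]
      · simp only [dif_neg h]
    rw [e1, sum_fin_to_range' n (fun j : ℕ => if h : j + 1 < n then
          (if P (y j) (y (j + 1)) then j + 1 else 0) else 0) (by intro j hj; simp [dif_neg hj])]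
    apply Finset.sum_congr rfl
    intro j hj
    simp only [Finset.mem_range] at hj
    rw [dif_pos (by omega : j + 1 < n)]
  have h1 : (∑ i : Fin n, if h : (i : ℕ) + 1 < n then
        (if P (x (⟨(i : ℕ) + 1, h⟩ : Fin n).rev : ℕ) (x i.rev : ℕ) then (i : ℕ) + 1 else 0) else 0)
      = ∑ j ∈ Finset.range (n - 1), if P (y j) (y (j + 1)) then n - 1 - j else 0 := by
    have e1 : (∑ i : Fin n, if h : (i : ℕ) + 1 < n then
        (if P (x (⟨(i : ℕ) + 1, h⟩ : Fin n).rev : ℕ) (x i.rev : ℕ) then (i : ℕ) + 1 else 0) else 0)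
      = ∑ i : Fin n, (fun j : ℕ => if h : j + 1 < n then
          (if P (y (n - 2 - j)) (y (n - 1 - j)) then j + 1 else 0) else 0) (i : ℕ) := by
      apply Finset.sum_congr rfl
      intro i _
      by_cases h : (i : ℕ) + 1 < n
      · simp only [dif_pos h]
        rw [hyval (⟨(i : ℕ) + 1, h⟩ : Fin n).rev (n - 2 - (i : ℕ))
              (by simp only [Fin.val_rev, Fin.val_mk]; omega),
            hyval i.rev (n - 1 - (i : ℕ)) (by rw [Fin.val_rev]; omega)]
      · simp only [dif_neg h]
    rw [e1, sum_fin_to_range' n (fun j : ℕ => if h : j + 1 < n then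
          (if P (y (n - 2 - j)) (y (n - 1 - j)) then j + 1 else 0) else 0)
          (by intro j hj; simp [dif_neg hj])]
    have e2 : (∑ j ∈ Finset.range (n - 1), (fun j : ℕ => if h : j + 1 < n then
          (if P (y (n - 2 - j)) (y (n - 1 - j)) then j + 1 else 0) else 0) j)
        = ∑ j ∈ Finset.range (n - 1),
            (fun j : ℕ => if P (y j) (y (j + 1)) then n - 1 - j else 0) (n - 1 - 1 - j) := by
      apply Finset.sum_congr rfl
      intro j hj
      simp only [Finset.mem_range] at hj
      dsimp only
      rw [dif_pos (by omega : j + 1 < n)]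
      have ej1 : n - 1 - 1 - j = n - 2 - j := by omega
      have ej2 : n - 2 - j + 1 = n - 1 - j := by omega
      have ej3 : n - 1 - (n - 2 - j) = j + 1 := by omega
      simp only [ej1, ej2, ej3]
    rw [e2]
    exact Finset.sum_range_reflect
      (fun j : ℕ => if P (y j) (y (j + 1)) then n - 1 - j else 0) (n - 1)
  rw [h1, h2, ← Finset.sum_add_distrib]
  rw [Nat.modEq_zero_iff_dvd]
  apply Finset.dvd_sum
  intro j hj
  simp only [Finset.mem_range] at hj
  by_cases hP : P (y j) (y (j + 1))
  · simp only [if_pos hP]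
    have : n - 1 - j + (j + 1) = n := by omega
    rw [this]
  · simp [if_neg hP]

private lemma modeq_swap' {n u v a b : ℕ} (huv : u + v ≡ 0 [MOD n]) (hab : a + b ≡ 0 [MOD n]) :
    u ≡ a [MOD n] ↔ v ≡ b [MOD n] := by
  constructor
  · intro h
    have h1 : v + u ≡ b + a [MOD n] := by
      calc v + u = u + v := by ring
        _ ≡ 0 [MOD n] := huv
        _ ≡ a + b [MOD n] := hab.symm
        _ = b + a := by ring
    exact Nat.ModEq.add_right_cancel h h1
  · intro h
    have h1 : u + v ≡ a + b [MOD n] := by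
      calc u + v ≡ 0 [MOD n] := huv
        _ ≡ b + a [MOD n] := by rw [add_comm] at hab; exact hab.symm
        _ = a + b := by ring
    exact Nat.ModEq.add_right_cancel h h1

private lemma sig_rev' {n r : ℕ} (x : Fin n → Fin r) :
    sig (fun i : Fin n => x i.rev) = sig x := by
  unfold sig
  exact Fintype.sum_bijective Fin.rev Fin.rev_bijective _ _ (fun i => rfl)

private lemma rev_invol' {n r : ℕ} :
    Function.Involutive (fun (x : Fin n → Fin r) (i : Fin n) => x i.rev) := by
  intro x
  funext i
  simp [Fin.rev_rev]

private lemma image_rev_eq' {n r : ℕ} (S T : Finset (Fin n → Fin r))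
    (h : ∀ x, x ∈ T ↔ (fun i : Fin n => x i.rev) ∈ S) :
    Finset.image (fun (x : Fin n → Fin r) (i : Fin n) => x i.rev) S = T := by
  ext z
  simp only [Finset.mem_image]
  constructor
  · rintro ⟨y, hy, rfl⟩
    rw [h]
    have := rev_invol' (n := n) (r := r) y
    simpa using hy
  · intro hz
    exact ⟨_, (h z).1 hz, rev_invol' z⟩

theorem stmt_13 (n r : ℕ) (hn : 0 < n) (hr : 0 < r)
    (a₁ a₂ : ℕ) (ha₁ : a₁ < n) (ha₂ : a₂ < r)
    (abar₁ : ℕ) (habar₁ : abar₁ = (n - a₁) * (if a₁ ≠ 0 then 1 else 0)) :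
    TltCode n r a₁ a₂
        = Finset.image (fun (x : Fin n → Fin r) (i : Fin n) => x i.rev) (Tcode n r abar₁ a₂) ∧
    TleCode n r a₁ a₂
        = Finset.image (fun (x : Fin n → Fin r) (i : Fin n) => x i.rev) (TgeCode n r abar₁ a₂) := by
  have hab : a₁ + abar₁ ≡ 0 [MOD n] := by
    by_cases h0 : a₁ = 0
    · simp [habar₁, h0, Nat.ModEq.refl]
    · rw [habar₁, if_pos h0, mul_one]
      have : a₁ + (n - a₁) = n := by omega
      rw [this]
      exact (Nat.modEq_zero_iff_dvd).2 dvd_rfl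
  constructor
  · apply (image_rev_eq' _ _ _).symm
    intro x
    simp only [TltCode, Tcode, Finset.mem_filter, Finset.mem_univ, true_and]
    have hkey : gam (fun i : Fin n => x i.rev) + lamLt x ≡ 0 [MOD n] := by
      simpa [gam, lamLt] using key' n r (fun a b => a < b) x
    have h1 : lamLt x ≡ a₁ [MOD n] ↔ gam (fun i : Fin n => x i.rev) ≡ abar₁ [MOD n] :=
      modeq_swap' (by rw [add_comm] at hkey; exact hkey) hab
    rw [h1, sig_rev' x]
  · apply (image_rev_eq' _ _ _).symm
    intro x
    simp only [TleCode, TgeCode, Finset.mem_filter, Finset.mem_univ, true_and]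
    have hkey : gamGe (fun i : Fin n => x i.rev) + lamLe x ≡ 0 [MOD n] := by
      simpa [gamGe, lamLe] using key' n r (fun a b => a ≤ b) x
    have h1 : lamLe x ≡ a₁ [MOD n] ↔ gamGe (fun i : Fin n => x i.rev) ≡ abar₁ [MOD n] :=
      modeq_swap' (by rw [add_comm] at hkey; exact hkey) hab
    rw [h1, sig_rev' x]
end

section
/- Let n, r be positive integers, a_1 ∈ {0,…,n−1}, a_2 ∈ {0,…,r−1}, and define a'_1 := (n − a_1)·𝟙{a_1 ≠ 0} if n is odd, and a'_1 := n/2 − a_1 + n·𝟙{a_1 > n/2} if n is even. Then T^{(≤)}_{a_1,a_2}(n,r) = T_{a'_1,a_2}(n,r) and T^{(≥)}_{a_1,a_2}(n,r) = T^{(<)}_{a'_1,a_2}(n,r). -/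
/-!
At every position exactly one of `x_i ≤ x_{i+1}`, `x_i > x_{i+1}` holds (likewise for `≥`, `<`), so
`λ_(≤)(x) + γ(x) = γ_(≥)(x) + λ_(<)(x) = ∑_{i<n} i = n(n-1)/2` for every word `x`. Modulo `n` this is
`0` for odd `n` and `n/2` for even `n`, and `a₁'` is the residue with `a₁ + a₁' ≡ n(n-1)/2 [MOD n]`,
so the two syndrome conditions are equivalent.
-/

open scoped Classical
open Finset

theorem sum_fin_ite_succ_lt (n : ℕ) :
    (∑ i : Fin n, if (i : ℕ) + 1 < n then (i : ℕ) + 1 else 0) = ∑ i ∈ range n, i := by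
  rw [Fin.sum_univ_eq_sum_range (fun i => if i + 1 < n then i + 1 else 0) n]
  cases n with
  | zero => simp
  | succ m =>
    rw [sum_range_succ, sum_range_succ' (fun i => i) m, if_neg (lt_irrefl _), add_zero,
      add_zero]
    exact sum_congr rfl fun i hi => if_pos (by simpa using mem_range.mp hi)

theorem lamLe_add_gam {n r : ℕ} (x : Fin n → Fin r) :
    lamLe x + gam x = ∑ i ∈ range n, i := by
  rw [lamLe, gam, ← sum_add_distrib, ← sum_fin_ite_succ_lt n]
  refine sum_congr rfl fun i _ => ?_
  by_cases h : (i : ℕ) + 1 < n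
  · simp only [dif_pos h, if_pos h]
    split_ifs <;> omega
  · simp [h]

theorem gamGe_add_lamLt {n r : ℕ} (x : Fin n → Fin r) :
    gamGe x + lamLt x = ∑ i ∈ range n, i := by
  rw [gamGe, lamLt, ← sum_add_distrib, ← sum_fin_ite_succ_lt n]
  refine sum_congr rfl fun i _ => ?_
  by_cases h : (i : ℕ) + 1 < n
  · simp only [dif_pos h, if_pos h]
    split_ifs <;> omega
  · simp [h]

theorem sum_range_id_modEq (n : ℕ) :
    ∑ i ∈ range n, i ≡ if Odd n then 0 else n / 2 [MOD n] := by
  have h2 := sum_range_id_mul_two n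
  split_ifs with hodd
  · obtain ⟨k, rfl⟩ := hodd
    have hsum : ∑ i ∈ range (2 * k + 1), i = (2 * k + 1) * k := by
      rw [Nat.add_sub_cancel] at h2; linarith
    rw [hsum]
    exact Nat.modEq_zero_iff_dvd.mpr (dvd_mul_right _ _)
  · obtain ⟨m, rfl⟩ := Nat.not_odd_iff_even.mp hodd
    rw [show (m + m) / 2 = m by omega]
    have hsum : ∑ i ∈ range (m + m), i + m = (m + m) * m := by
      rcases m with _ | m
      · simp
      · rw [show m + 1 + (m + 1) - 1 = 2 * m + 1 by omega] at h2; nlinarith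
    refine Nat.ModEq.add_right_cancel' m ?_
    rw [hsum]
    exact (Nat.modEq_zero_iff_dvd.mpr (dvd_mul_right _ _)).trans
      (Nat.modEq_zero_iff_dvd.mpr dvd_rfl).symm

theorem modEq_iff_of_add_eq {n L Γ G a a' : ℕ} (hsum : L + Γ = G) (ha : a + a' ≡ G [MOD n]) :
    L ≡ a [MOD n] ↔ Γ ≡ a' [MOD n] := by
  subst hsum
  constructor
  · intro hL
    exact Nat.ModEq.add_left_cancel' a ((hL.add_right Γ).symm.trans ha.symm)
  · intro hΓ
    exact Nat.ModEq.add_right_cancel' a' ((hΓ.add_left L).symm.trans ha.symm)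

theorem add_dual_modEq {n a a' : ℕ} (ha : a < n)
    (ha' : a' = if Odd n then (n - a) * (if a ≠ 0 then 1 else 0)
                else n / 2 + n * (if n / 2 < a then 1 else 0) - a) :
    a + a' ≡ if Odd n then 0 else n / 2 [MOD n] := by
  subst ha'
  split_ifs with hodd hne hlt
  · rw [show a + (n - a) * 1 = 0 + n * 1 by omega]
    exact Nat.add_mul_mod_self_left 0 n 1
  · simp [not_not.mp hne, Nat.ModEq]
  · rw [show a + (n / 2 + n * 1 - a) = n / 2 + n * 1 by omega]
    exact Nat.add_mul_mod_self_left _ n 1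
  · rw [show a + (n / 2 + n * 0 - a) = n / 2 by omega]

theorem stmt_14_general (n r : ℕ)
    (a₁ a₂ : ℕ) (ha₁ : a₁ < n)
    (a₁' : ℕ)
    (ha₁' : a₁' = if Odd n then (n - a₁) * (if a₁ ≠ 0 then 1 else 0)
                  else n / 2 + n * (if n / 2 < a₁ then 1 else 0) - a₁) :
    TleCode n r a₁ a₂ = Tcode n r a₁' a₂ ∧
    TgeCode n r a₁ a₂ = TltCode n r a₁' a₂ := by
  have hG := (add_dual_modEq ha₁ ha₁').trans (sum_range_id_modEq n).symm
  constructor <;> ext x <;>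
    simp only [TleCode, Tcode, TgeCode, TltCode, mem_filter, mem_univ, true_and] <;>
    refine and_congr_left fun _ => ?_
  · exact modEq_iff_of_add_eq (lamLe_add_gam x) hG
  · exact modEq_iff_of_add_eq (gamGe_add_lamLt x) hG

theorem stmt_14 (n r : ℕ) (hn : 0 < n) (hr : 0 < r)
    (a₁ a₂ : ℕ) (ha₁ : a₁ < n) (ha₂ : a₂ < r)
    (a₁' : ℕ)
    (ha₁' : a₁' = if Odd n then (n - a₁) * (if a₁ ≠ 0 then 1 else 0)
                  else n / 2 + n * (if n / 2 < a₁ then 1 else 0) - a₁) :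
    TleCode n r a₁ a₂ = Tcode n r a₁' a₂ ∧
    TgeCode n r a₁ a₂ = TltCode n r a₁' a₂ :=
  stmt_14_general n r a₁ a₂ ha₁ a₁' ha₁'
end
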